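/- If some vertex of a graph G is adjacent to at least two vertices of degree one, then b(G) = 1. -/

import Mathlib

open SimpleGraph

variable {V : Type*}

/-- `S` is a dominating set of `G`: every vertex is in `S` or has a neighbor in `S`. -/
def SimpleGraph.IsDomSet (G : SimpleGraph V) (S : Finset V) : Prop :=
  ∀ v : V, v ∈ S ∨ ∃ u ∈ S, G.Adj u v

/-- The domination number of a finite graph. -/
noncomputable def SimpleGraph.domNum [Fintype V] (G : SimpleGraph V) : ℕ :=
  sInf {n | ∃ S : Finset V, S.card = n ∧ G.IsDomSet S}

/-- The bondage number: the minimum size of a set of edges of `G` whose removal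
increases the domination number. -/
noncomputable def SimpleGraph.bondageNum [Fintype V] (G : SimpleGraph V) : ℕ :=
  sInf {n | ∃ B : Finset (Sym2 V), B.card = n ∧ ↑B ⊆ G.edgeSet ∧
    G.domNum < (G.deleteEdges ↑B).domNum}

/-!
Delete the edge `xy`. In `G - xy` the vertex `y` is isolated, so every dominating set `D` of
`G - xy` contains `y`, and it contains `x` or `z` because `z` is still a leaf at `x`. Replacing
`y` and `z` by `x` turns `D` into a dominating set of `G` with fewer vertices, so a single edge
deletion raises the domination number.
-/

open Finset

theorem Finset.card_insert_sdiff_pair_lt {α : Type*} [DecidableEq α] {s : Finset α} {x y z : α}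
    (hxy : x ≠ y) (hyz : y ≠ z) (hy : y ∈ s) (hxz : x ∈ s ∨ z ∈ s) :
    (insert x (s \ {y, z})).card < s.card := by
  rcases hxz with hx | hz
  · refine (card_le_card fun v hv => ?_).trans_lt (card_erase_lt_of_mem hy)
    rcases mem_insert.1 hv with rfl | hv
    · exact mem_erase.2 ⟨hxy, hx⟩
    · simp only [mem_sdiff, mem_insert, mem_singleton, not_or] at hv
      exact mem_erase.2 ⟨hv.2.1, hv.1⟩
  · have hyz_sub : {y, z} ⊆ s := insert_subset hy (singleton_subset_iff.2 hz)
    have := card_sdiff_of_subset hyz_sub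
    have := card_pair hyz
    have := card_le_card hyz_sub
    have := card_insert_le x (s \ {y, z})
    omega

namespace SimpleGraph

theorem neighborSet_eq_singleton_of_degree_eq_one {G : SimpleGraph V} {x y : V}
    [Fintype (G.neighborSet y)] (hy : G.degree y = 1) (hxy : G.Adj x y) :
    G.neighborSet y = {x} := by
  obtain ⟨w, -, hw⟩ := degree_eq_one_iff_existsUnique_adj.mp hy
  ext u
  simp only [mem_neighborSet, Set.mem_singleton_iff]
  exact ⟨fun hu => (hw u hu).trans (hw x hxy.symm).symm, fun hu => hu ▸ hxy.symm⟩

theorem neighborSet_deleteEdges_eq_empty {G : SimpleGraph V} {x y : V}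
    (hy : G.neighborSet y = {x}) : (G.deleteEdges {s(x, y)}).neighborSet y = ∅ := by
  ext u
  have : G.Adj y u → u = x := fun h => Set.mem_singleton_iff.1 (hy ▸ h)
  simp only [mem_neighborSet, deleteEdges_adj, Set.mem_singleton_iff, Set.mem_empty_iff_false,
    iff_false, not_and, not_not]
  intro h
  rw [this h, Sym2.eq_swap]

namespace IsDomSet

variable {G H : SimpleGraph V} {S : Finset V}

theorem mono (hHG : H ≤ G) (hS : H.IsDomSet S) : G.IsDomSet S := fun v =>
  (hS v).imp_right fun ⟨u, hu, huv⟩ => ⟨u, hu, hHG huv⟩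

theorem mem_of_neighborSet_eq_empty (hS : G.IsDomSet S) {v : V} (hv : G.neighborSet v = ∅) :
    v ∈ S :=
  (hS v).resolve_right fun ⟨u, _, huv⟩ => (hv ▸ huv.symm : u ∈ (∅ : Set V))

theorem mem_or_mem_of_neighborSet_eq_singleton (hS : G.IsDomSet S) {v x : V}
    (hv : G.neighborSet v = {x}) : v ∈ S ∨ x ∈ S :=
  (hS v).imp_right fun ⟨u, hu, huv⟩ => (hv ▸ huv.symm : u ∈ ({x} : Set V)) ▸ hu

theorem insert_sdiff [DecidableEq V] (hS : G.IsDomSet S) {x : V} {L : Finset V}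
    (hL : ∀ l ∈ L, G.neighborSet l = {x}) : G.IsDomSet (insert x (S \ L)) := by
  intro v
  by_cases hvx : v = x
  · exact .inl (hvx ▸ mem_insert_self _ _)
  by_cases hvL : v ∈ L
  · exact .inr ⟨x, mem_insert_self _ _, (hL v hvL ▸ rfl : x ∈ G.neighborSet v).symm⟩
  rcases hS v with hv | ⟨u, hu, huv⟩
  · exact .inl (mem_insert_of_mem (mem_sdiff.2 ⟨hv, hvL⟩))
  · have huL : u ∉ L := fun huL => hvx (hL u huL ▸ huv : v ∈ ({x} : Set V))
    exact .inr ⟨u, mem_insert_of_mem (mem_sdiff.2 ⟨hu, huL⟩), huv⟩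

end IsDomSet

section Fintype

variable [Fintype V] {G : SimpleGraph V}

theorem exists_isDomSet_card_eq_domNum (G : SimpleGraph V) :
    ∃ S : Finset V, S.card = G.domNum ∧ G.IsDomSet S :=
  Nat.sInf_mem (s := {n | ∃ S : Finset V, S.card = n ∧ G.IsDomSet S})
    ⟨_, univ, rfl, fun v => .inl (mem_univ v)⟩

theorem domNum_le_card {S : Finset V} (hS : G.IsDomSet S) : G.domNum ≤ S.card :=
  Nat.sInf_le ⟨S, rfl, hS⟩

theorem bondageNum_eq_one_of_domNum_lt {e : Sym2 V} (he : e ∈ G.edgeSet)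
    (h : G.domNum < (G.deleteEdges {e}).domNum) : G.bondageNum = 1 := by
  have h1 : 1 ∈ {n | ∃ B : Finset (Sym2 V), B.card = n ∧ ↑B ⊆ G.edgeSet ∧
      G.domNum < (G.deleteEdges ↑B).domNum} :=
    ⟨{e}, card_singleton e, by simpa using he, by simpa using h⟩
  obtain ⟨B, hB, -, hlt⟩ := Nat.sInf_mem ⟨1, h1⟩
  have hB0 : B.Nonempty := nonempty_iff_ne_empty.2 (by rintro rfl; simp at hlt)
  exact le_antisymm (Nat.sInf_le h1) (hB ▸ hB0.card_pos : 0 < sInf _)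

theorem domNum_lt_domNum_deleteEdges_of_two_leaves {x y z : V} (hyz : y ≠ z)
    (hy : G.neighborSet y = {x}) (hz : G.neighborSet z = {x}) :
    G.domNum < (G.deleteEdges {s(x, y)}).domNum := by
  classical
  obtain ⟨D, hDcard, hD⟩ := (G.deleteEdges {s(x, y)}).exists_isDomSet_card_eq_domNum
  have hDG : G.IsDomSet D := hD.mono (G.deleteEdges_le _)
  have hyD : y ∈ D := hD.mem_of_neighborSet_eq_empty (neighborSet_deleteEdges_eq_empty hy)
  have hxy : x ≠ y := (G.ne_of_adj (hy ▸ rfl : x ∈ G.neighborSet y)).symm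
  have hleaves : ∀ l ∈ ({y, z} : Finset V), G.neighborSet l = {x} := by
    simp only [mem_insert, mem_singleton, forall_eq_or_imp, forall_eq]
    exact ⟨hy, hz⟩
  calc G.domNum ≤ (insert x (D \ {y, z})).card := domNum_le_card (hDG.insert_sdiff hleaves)
    _ < D.card := card_insert_sdiff_pair_lt hxy hyz hyD
        (hDG.mem_or_mem_of_neighborSet_eq_singleton hz).symm
    _ = _ := hDcard

end Fintype

end SimpleGraph

theorem bondage_eq_one_of_two_pendant [Fintype V]
    (G : SimpleGraph V) [DecidableRel G.Adj] {x y z : V} (hyz : y ≠ z)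
    (hy : G.degree y = 1) (hz : G.degree z = 1)
    (hxy : G.Adj x y) (hxz : G.Adj x z) :
    G.bondageNum = 1 :=
  bondageNum_eq_one_of_domNum_lt hxy <| domNum_lt_domNum_deleteEdges_of_two_leaves hyz
    (neighborSet_eq_singleton_of_degree_eq_one hy hxy)
    (neighborSet_eq_singleton_of_degree_eq_one hz hxz)
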